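/- For any self-dual complex two-form A on Minkowski space with invariant a (a² = (1/4)·tr(A·A)), one has exp(A) = cosh(a)·I + SH(a)·A. -/

import Mathlib

open Matrix

noncomputable section

/-- The Minkowski metric matrix `diag(1,-1,-1,-1)`. -/
def minkEta : Matrix (Fin 4) (Fin 4) ℂ := Matrix.diagonal ![1, -1, -1, -1]

/-- The Levi-Civita symbol `ε(i,j,k,l)`: the sign of `(i,j,k,l)` as a permutation of
`(0,1,2,3)`, and `0` if the indices are not all distinct; `ε(0,1,2,3) = 1`. -/
def eps (i j k l : Fin 4) : ℂ :=
  Matrix.det (Matrix.of ![Pi.single i 1, Pi.single j 1, Pi.single k 1, Pi.single l 1])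

/-- A (complex) two-form on Minkowski space: `Fᵀ·η + η·F = 0`. -/
def IsTwoForm (F : Matrix (Fin 4) (Fin 4) ℂ) : Prop :=
  Fᵀ * minkEta + minkEta * F = 0

/-- The Hodge dual of a two-form:
`(*F)^μ_ν = (1/2)·Σ η_{μρ}·ε(ρ,ν,σ,τ)·F^σ_λ·η_{λτ}`. -/
def dual (F : Matrix (Fin 4) (Fin 4) ℂ) : Matrix (Fin 4) (Fin 4) ℂ :=
  Matrix.of fun μ ν => (1/2 : ℂ) *
    ∑ ρ : Fin 4, ∑ σ : Fin 4, ∑ lam : Fin 4, ∑ τ : Fin 4,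
      minkEta μ ρ * eps ρ ν σ τ * F σ lam * minkEta lam τ

/-- A self-dual complex two-form: a two-form with `*A = i·A`. -/
def SelfDual (A : Matrix (Fin 4) (Fin 4) ℂ) : Prop :=
  IsTwoForm A ∧ dual A = Complex.I • A

/-- An anti-self-dual complex two-form: a two-form with `*A = -i·A`. -/
def AntiSelfDual (A : Matrix (Fin 4) (Fin 4) ℂ) : Prop :=
  IsTwoForm A ∧ dual A = (-Complex.I) • A

/-- A matrix with real entries. -/
def RealEntries (F : Matrix (Fin 4) (Fin 4) ℂ) : Prop :=
  ∀ i j, (F i j).im = 0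

/-- `SH z = sinh z / z` for `z ≠ 0` and `SH 0 = 1`. -/
def SH (z : ℂ) : ℂ := if z = 0 then 1 else Complex.sinh z / z

/-!
A self-dual two-form is determined by its electric part `e = (A₀₁, A₀₂, A₀₃)`, its magnetic part
being `-i·e`. For such a matrix `A² = (e·e)·I`, and taking traces gives `e·e = ¼ tr(A²) = a²`.
So the even powers of `A` are scalars and the odd ones multiples of `A`: the exponential series
splits into the series of `cosh a` and `A` times the series of `sinh a / a`.
-/

open Complex
open scoped Nat

theorem hasSum_SH (z : ℂ) : HasSum (fun n : ℕ ↦ z ^ (2 * n) / (2 * n + 1)!) (SH z) := by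
  rcases eq_or_ne z 0 with rfl | hz
  · convert hasSum_ite_eq 0 (1 : ℂ) using 2 with n
    · rcases eq_or_ne n 0 with rfl | hn <;> simp [*]
    · simp [SH]
  · rw [SH, if_neg hz]
    simpa [pow_succ, mul_div_right_comm _ z, hz] using z.hasSum_sinh.div_const z

section

variable {𝔸 : Type*} [Ring 𝔸] [Algebra ℂ 𝔸] [TopologicalSpace 𝔸] [IsTopologicalRing 𝔸]
  [ContinuousSMul ℂ 𝔸] [T2Space 𝔸]

theorem exp_eq_cosh_add_SH_smul_of_mul_self {M : 𝔸} {a : ℂ} (h : M * M = a ^ 2 • (1 : 𝔸)) :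
    NormedSpace.exp M = Complex.cosh a • (1 : 𝔸) + SH a • M := by
  have hEven (n : ℕ) : M ^ (2 * n) = a ^ (2 * n) • (1 : 𝔸) := by
    rw [pow_mul, sq, h, smul_pow, one_pow, ← pow_mul]
  have hOdd (n : ℕ) : M ^ (2 * n + 1) = a ^ (2 * n) • M := by
    rw [pow_succ, hEven, smul_one_mul]
  have hCosh := (Complex.hasSum_cosh a).smul_const (1 : 𝔸)
  have hSinh := (hasSum_SH a).smul_const M
  rw [NormedSpace.exp_eq_tsum ℂ]
  refine (HasSum.even_add_odd ?_ ?_).tsum_eq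
  · simpa [hEven, smul_smul, div_eq_inv_mul] using hCosh
  · simpa [hOdd, smul_smul, div_eq_inv_mul] using hSinh

end

theorem isTwoForm_iff_forall (F : Matrix (Fin 4) (Fin 4) ℂ) :
    IsTwoForm F ↔ ∀ μ ν, minkEta ν ν * F ν μ + minkEta μ μ * F μ ν = 0 := by
  simp [IsTwoForm, ← Matrix.ext_iff, minkEta, Matrix.mul_diagonal, Matrix.diagonal_mul, mul_comm]

theorem IsTwoForm.eta_fin_four {F : Matrix (Fin 4) (Fin 4) ℂ} (hF : IsTwoForm F) :
    F = !![0, F 0 1, F 0 2, F 0 3;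
           F 0 1, 0, F 1 2, F 1 3;
           F 0 2, -F 1 2, 0, F 2 3;
           F 0 3, -F 1 3, -F 2 3, 0] := by
  ext i j
  have h := (isTwoForm_iff_forall F).1 hF i j
  fin_cases i <;> fin_cases j <;> simp [minkEta] at h ⊢ <;> grind

section

variable (F : Matrix (Fin 4) (Fin 4) ℂ)

theorem dual_apply_two_three : dual F 2 3 = (F 0 1 + F 1 0) / 2 := by
  simp [dual, minkEta, Matrix.diagonal, eps, Matrix.det_succ_row_zero, Fin.sum_univ_succ,
    Pi.single_apply, Fin.succAbove, div_eq_inv_mul]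

theorem dual_apply_one_three : dual F 1 3 = -(F 2 0 + F 0 2) / 2 := by
  simp [dual, minkEta, Matrix.diagonal, eps, Matrix.det_succ_row_zero, Fin.sum_univ_succ,
    Pi.single_apply, Fin.succAbove, div_eq_inv_mul]

theorem dual_apply_one_two : dual F 1 2 = (F 0 3 + F 3 0) / 2 := by
  simp [dual, minkEta, Matrix.diagonal, eps, Matrix.det_succ_row_zero, Fin.sum_univ_succ,
    Pi.single_apply, Fin.succAbove, div_eq_inv_mul]

end

def selfDualMatrix (e₁ e₂ e₃ : ℂ) : Matrix (Fin 4) (Fin 4) ℂ :=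
  !![0, e₁, e₂, e₃;
     e₁, 0, -I * e₃, I * e₂;
     e₂, I * e₃, 0, -I * e₁;
     e₃, -I * e₂, I * e₁, 0]

theorem selfDualMatrix_mul_self (e₁ e₂ e₃ : ℂ) :
    selfDualMatrix e₁ e₂ e₃ * selfDualMatrix e₁ e₂ e₃ = (e₁ ^ 2 + e₂ ^ 2 + e₃ ^ 2) • 1 := by
  ext i j
  fin_cases i <;> fin_cases j <;>
    simp [selfDualMatrix, Matrix.mul_apply, Fin.sum_univ_four] <;> grind [I_sq]

theorem SelfDual.eq_selfDualMatrix {A : Matrix (Fin 4) (Fin 4) ℂ} (hA : SelfDual A) :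
    A = selfDualMatrix (A 0 1) (A 0 2) (A 0 3) := by
  obtain ⟨hTwo, hDual⟩ := hA
  have hEntry (μ ν : Fin 4) : dual A μ ν = I * A μ ν := by simp [hDual]
  have h23 := dual_apply_two_three A ▸ hEntry 2 3
  have h13 := dual_apply_one_three A ▸ hEntry 1 3
  have h12 := dual_apply_one_two A ▸ hEntry 1 2
  rw [hTwo.eta_fin_four] at h23 h13 h12
  simp only [of_apply, cons_val', cons_val_one, cons_val_zero, cons_val_fin_one, add_self_div_two,
    cons_val, neg_add_rev] at h23 h13 h12
  have hB₁ : A 2 3 = -I * A 0 1 := by linear_combination I * h23 + A 2 3 * I_sq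
  have hB₂ : A 1 3 = I * A 0 2 := by linear_combination I * h13 + A 1 3 * I_sq
  have hB₃ : A 1 2 = -I * A 0 3 := by linear_combination I * h12 + A 1 2 * I_sq
  conv_lhs => rw [hTwo.eta_fin_four, hB₁, hB₂, hB₃]
  simp [selfDualMatrix]

theorem SelfDual.mul_self_eq_trace_smul_one {A : Matrix (Fin 4) (Fin 4) ℂ} (hA : SelfDual A) :
    A * A = ((1 / 4 : ℂ) * trace (A * A)) • 1 := by
  have hSq : A * A = (A 0 1 ^ 2 + A 0 2 ^ 2 + A 0 3 ^ 2) • 1 := by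
    rw [hA.eq_selfDualMatrix, selfDualMatrix_mul_self]
    simp [selfDualMatrix]
  rw [hSq, trace_smul, trace_one, Fintype.card_fin, smul_eq_mul]
  congr 1
  push_cast
  ring

/-- Exponential of a self-dual two-form `A` with invariant `a`:
`exp A = cosh(a)·I + SH(a)·A`. -/
theorem selfDual_exp (A : Matrix (Fin 4) (Fin 4) ℂ) (hA : SelfDual A)
    (a : ℂ) (ha : a ^ 2 = (1/4 : ℂ) * Matrix.trace (A * A)) :
    NormedSpace.exp A = Complex.cosh a • (1 : Matrix (Fin 4) (Fin 4) ℂ) + SH a • A :=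
  exp_eq_cosh_add_SH_smul_of_mul_self (ha ▸ hA.mul_self_eq_trace_smul_one)
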